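/- arXiv:2110.02134 — 4 statements merged into one kernel-verified Lean document; each statement's English description precedes it below -/
import Mathlib

section
/- Let h : ℝ^n → ℝ be strictly convex and differentiable, and define g(x) = ∇h(x) - (∇h(x))₁ · 𝟙 (subtracting the first coordinate of the gradient from every coordinate). Then g is injective on the relative interior of the probability simplex: if x ≠ x' are two points in the relative interior of the simplex, then g(x) ≠ g(x'). -/
open scoped RealInnerProductSpace

/-- If `h` is strictly convex and differentiable (with gradient `h'`)
on an open set `s` containing the relative interior of the probability simplex,
and `g x = ∇h(x) - (∇h(x))₁ · 𝟙`, then `g` is injective on the relative interior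
of the simplex. -/
theorem gradient_shift_injective_on_simplex_interior
    (n : ℕ) (hn : 0 < n)
    (h : EuclideanSpace ℝ (Fin n) → ℝ)
    (h' : EuclideanSpace ℝ (Fin n) → EuclideanSpace ℝ (Fin n))
    (s : Set (EuclideanSpace ℝ (Fin n))) (hs : IsOpen s)
    (hsub : {x : EuclideanSpace ℝ (Fin n) |
        (∀ i, 0 < x i) ∧ ∑ i, x i = 1} ⊆ s)
    (hconv : StrictConvexOn ℝ s h)
    (hgrad : ∀ x ∈ s, HasGradientAt h (h' x) x)
    (g : EuclideanSpace ℝ (Fin n) → EuclideanSpace ℝ (Fin n))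
    (hg : ∀ x i, g x i = h' x i - h' x ⟨0, hn⟩)
    (x x' : EuclideanSpace ℝ (Fin n))
    (hx : (∀ i, 0 < x i) ∧ ∑ i, x i = 1)
    (hx' : (∀ i, 0 < x' i) ∧ ∑ i, x' i = 1)
    (hne : x ≠ x') :
    g x ≠ g x' := by
  intro heq
  set d : EuclideanSpace ℝ (Fin n) := x' - x with hd
  have hdne : d ≠ 0 := sub_ne_zero.mpr (Ne.symm hne)
  set ℓ : ℝ → EuclideanSpace ℝ (Fin n) := fun t => x + t • d with hℓ
  have hℓ0 : ℓ 0 = x := by simp [hℓ]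
  have hℓ1 : ℓ 1 = x' := by simp [hℓ, hd]
  have happ : ∀ (t : ℝ) (i : Fin n), ℓ t i = x i + t * (x' i - x i) := by
    intro t i
    simp [hℓ, hd, PiLp.add_apply, PiLp.smul_apply, PiLp.sub_apply, smul_eq_mul]
  have hmem : ∀ t ∈ Set.Icc (0:ℝ) 1,
      ℓ t ∈ {y : EuclideanSpace ℝ (Fin n) | (∀ i, 0 < y i) ∧ ∑ i, y i = 1} := by
    intro t ht
    constructor
    · intro i
      rw [happ]
      have h1 : x i + t * (x' i - x i) = (1 - t) * x i + t * x' i := by ring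
      rw [h1]
      rcases eq_or_lt_of_le ht.2 with ht1 | ht1
      · rw [ht1]; simpa using hx'.1 i
      · nlinarith [hx.1 i, hx'.1 i, ht.1, mul_pos (by linarith : (0:ℝ) < 1 - t) (hx.1 i),
          mul_nonneg ht.1 (hx'.1 i).le]
    · have h2 : ∑ i, ℓ t i = ∑ i, (x i + t * (x' i - x i)) :=
        Finset.sum_congr rfl fun i _ => happ t i
      rw [h2, Finset.sum_add_distrib, ← Finset.mul_sum, Finset.sum_sub_distrib,
        hx'.2, hx.2, sub_self, mul_zero, add_zero]
  have hmems : ∀ t ∈ Set.Icc (0:ℝ) 1, ℓ t ∈ s := fun t ht => hsub (hmem t ht)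
  set φ : ℝ → ℝ := fun t => h (ℓ t) with hφ
  have hφconv : StrictConvexOn ℝ (Set.Icc (0:ℝ) 1) φ := by
    refine ⟨convex_Icc 0 1, ?_⟩
    intro a ha b hb hab p q hp hq hpq
    have hcomb : ℓ (p * a + q * b) = p • ℓ a + q • ℓ b := by
      ext i
      simp only [hℓ, hd, PiLp.add_apply, PiLp.smul_apply, PiLp.sub_apply, smul_eq_mul]
      linear_combination (-(x i)) * hpq
    have hneq : ℓ a ≠ ℓ b := by
      intro he
      apply hdne
      have h2 : a • d = b • d := by
        simpa [hℓ, add_right_cancel_iff] using he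
      have h3 : (a - b) • d = 0 := by rw [sub_smul, h2, sub_self]
      rcases smul_eq_zero.mp h3 with h4 | h4
      · exact absurd (sub_eq_zero.mp h4) hab
      · exact h4
    have hlt := hconv.2 (hmems a ha) (hmems b hb) hneq hp hq hpq
    simpa [hφ, hcomb, smul_eq_mul] using hlt
  have hderiv : ∀ t ∈ Set.Icc (0:ℝ) 1, HasDerivAt φ ⟪h' (ℓ t), d⟫ t := by
    intro t ht
    have hline : HasDerivAt ℓ d t := by
      have h1 : HasDerivAt (fun u : ℝ => u • d) ((1:ℝ) • d) t :=
        (hasDerivAt_id t).smul_const d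
      simpa [hℓ] using h1.const_add x
    have hf := (hgrad (ℓ t) (hmems t ht)).hasFDerivAt
    have h2 := hf.comp_hasDerivAt t hline
    have h3 : (InnerProductSpace.toDual ℝ (EuclideanSpace ℝ (Fin n)) (h' (ℓ t))) d
        = ⟪h' (ℓ t), d⟫ := InnerProductSpace.toDual_apply_apply
    rw [← h3]
    exact h2
  have hmem0 : (0:ℝ) ∈ Set.Icc (0:ℝ) 1 := by constructor <;> norm_num
  have hmem1 : (1:ℝ) ∈ Set.Icc (0:ℝ) 1 := by constructor <;> norm_num
  have hlt1 : ⟪h' x, d⟫ < slope φ 0 1 :=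
    hφconv.lt_slope_of_hasDerivAt hmem0 hmem1 one_pos
      (by simpa [hℓ0] using hderiv 0 hmem0)
  have hlt2 : slope φ 0 1 < ⟪h' x', d⟫ :=
    hφconv.slope_lt_of_hasDerivAt hmem0 hmem1 one_pos
      (by simpa [hℓ1] using hderiv 1 hmem1)
  have hlt : ⟪h' x, d⟫ < ⟪h' x', d⟫ := hlt1.trans hlt2
  have hdiff : ∀ i, h' x' i - h' x i = h' x' ⟨0, hn⟩ - h' x ⟨0, hn⟩ := by
    intro i
    have h3 : g x i = g x' i := by rw [heq]
    rw [hg x i, hg x' i] at h3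
    linarith
  have heqinner : ⟪h' x', d⟫ - ⟪h' x, d⟫ = 0 := by
    have hdi : ∀ i, d i = x' i - x i := fun i => by simp [hd, PiLp.sub_apply]
    have hsum0 : ∑ i, d i = 0 := by
      rw [Finset.sum_congr rfl fun i _ => hdi i, Finset.sum_sub_distrib,
        hx'.2, hx.2, sub_self]
    calc ⟪h' x', d⟫ - ⟪h' x, d⟫
        = ∑ i, (h' x' i - h' x i) * d i := by
          simp only [PiLp.inner_apply, RCLike.inner_apply, conj_trivial]
          rw [← Finset.sum_sub_distrib]
          exact Finset.sum_congr rfl fun i _ => by ring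
      _ = ∑ i, (h' x' ⟨0, hn⟩ - h' x ⟨0, hn⟩) * d i :=
          Finset.sum_congr rfl fun i _ => by rw [hdiff i]
      _ = (h' x' ⟨0, hn⟩ - h' x ⟨0, hn⟩) * ∑ i, d i := by rw [Finset.mul_sum]
      _ = 0 := by rw [hsum0, mul_zero]
  linarith
end

section
/- Consider the stochastic multiplicative-weights Markov chain on the dual payoff space: states are cumulative payoff vectors y = (y₁,…,y_N) reachable from y⁰, and from state y the chain moves to (yᵢ + ∑_{j≠i} A^{(ij)} e_{sⱼ})ᵢ with probability ∏ⱼ x_{j sⱼ} where x_j = ∇h_j*(y_j) > 0 componentwise. If the network zero-sum game has a rational fully-mixed Nash equilibrium x* with ∑_{j≠i} A^{(ij)} x*_j = 0 for all i, then this Markov chain on its countable reachable state space is irreducible. -/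
/-!
Every step of the chain can be undone. Write `x* = c / b` with positive integers `c` and weight
the pure profile `s` by `m s = ∏ⱼ c_{j sⱼ} ≥ 1`. Then `∑ₛ m s • Δ s = b ^ N • 𝔼_{x*}[Δ] = 0`,
where `Δ s` is the one-step increment, because the expected increment
`𝔼_{x*}[Δ]ᵢ = ∑_{j≠i} A^{(ij)} x*_j` vanishes at the equilibrium. Hence `-Δ s` is a sum of
increments of finitely many steps, so reachability is symmetric and any two states reachable
from `y⁰` communicate.
-/

open Finset Matrix

variable {N : ℕ} {S : Fin N → ℕ}

/-- One step of the dual-space payoff dynamics: when the pure profile `s` is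
realized, each agent `i`'s cumulative payoff vector is updated by
`yᵢ ↦ yᵢ + ∑_{j ≠ i} A^{(ij)} e_{sⱼ}`. -/
def dualStep (A : ∀ i j : Fin N, Matrix (Fin (S i)) (Fin (S j)) ℝ)
    (y : ∀ i, Fin (S i) → ℝ) (s : ∀ j, Fin (S j)) : ∀ i, Fin (S i) → ℝ :=
  fun i => y i + ∑ j ∈ Finset.univ.erase i, (A i j).mulVec (Pi.single (s j) 1)

/-- The one-step (positive-probability) transition relation of the stochastic
FTRL dual chain: since the FTRL map `∇h*` always outputs strictly positive
probability vectors, every pure profile `s` is realized with positive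
probability, so `y'` is reachable from `y` in one step with positive probability
iff `y' = dualStep A y s` for some profile `s`. -/
def dualRel (A : ∀ i j : Fin N, Matrix (Fin (S i)) (Fin (S j)) ℝ)
    (y y' : ∀ i, Fin (S i) → ℝ) : Prop :=
  ∃ s : ∀ j, Fin (S j), y' = dualStep A y s


open Relation

section Translation

variable {G : Type*} [AddCommGroup G]

def reachableDisplacements (R : G → G → Prop) : AddSubmonoid G where
  carrier := {w | ∀ y, ReflTransGen R y (y + w)}
  zero_mem' y := by simpa using ReflTransGen.refl
  add_mem' {w₁ w₂} h₁ h₂ y := by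
    simpa only [add_assoc] using (h₁ y).trans (h₂ (y + w₁))

theorem Relation.ReflTransGen.symm_of_sum_nsmul_eq_zero {ι : Type*} [Fintype ι] [DecidableEq ι]
    (v : ι → G) (m : ι → ℕ) (hm : ∀ s, 0 < m s) (hv : ∑ s, m s • v s = 0)
    {y y' : G} (h : ReflTransGen (fun y y' => ∃ s, y' = y + v s) y y') :
    ReflTransGen (fun y y' => ∃ s, y' = y + v s) y' y := by
  set R : G → G → Prop := fun y y' => ∃ s, y' = y + v s
  have hstep : ∀ s, v s ∈ reachableDisplacements R := fun s y => .single ⟨s, rfl⟩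
  have hneg : ∀ s, -v s ∈ reachableDisplacements R := by
    intro s
    have hsplit : -v s = (m s - 1) • v s + ∑ t ∈ univ.erase s, m t • v t := by
      rw [← Finset.add_sum_erase _ _ (mem_univ s)] at hv
      rw [neg_eq_iff_add_eq_zero, ← add_assoc, ← succ_nsmul', Nat.sub_add_cancel (hm s), hv]
    rw [hsplit]
    exact add_mem (nsmul_mem (hstep s) _) (sum_mem fun t _ => nsmul_mem (hstep t) _)
  have hback : ∀ y y', R y y' → ReflTransGen R y' y := by
    rintro y _ ⟨s, rfl⟩
    simpa using hneg s (y + v s)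
  exact ReflTransGen.lift' id (fun a b hab => hback b a hab) y' y (reflTransGen_swap.mpr h)

end Translation

theorem Fintype.sum_prod_mul_apply {ι R : Type*} [Fintype ι] [DecidableEq ι] [CommSemiring R]
    {κ : ι → Type*} [∀ i, Fintype (κ i)] (x : ∀ i, κ i → R) (j : ι) (f : κ j → R) :
    ∑ s : ∀ i, κ i, (∏ i, x i (s i)) * f (s j) =
      (∑ k, x j k * f k) * ∏ i ∈ {j}ᶜ, ∑ k, x i k := by
  set x' := Function.update x j fun k => x j k * f k
  have hx' : ∀ i ∈ ({j}ᶜ : Finset ι), x' i = x i := fun i hi =>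
    Function.update_of_ne (by simpa using hi) _ _
  have hprod : ∀ s : ∀ i, κ i, (∏ i, x i (s i)) * f (s j) = ∏ i, x' i (s i) := by
    intro s
    rw [Fintype.prod_eq_mul_prod_compl j, Fintype.prod_eq_mul_prod_compl j fun i => x' i (s i),
      Finset.prod_congr rfl fun i hi => congrFun (hx' i hi) (s i)]
    simp only [x', Function.update_self]
    ring
  rw [Finset.sum_congr rfl fun s _ => hprod s, ← Fintype.prod_sum,
    Fintype.prod_eq_mul_prod_compl j,
    Finset.prod_congr rfl fun i hi => congrArg (∑ k, · k) (hx' i hi)]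
  simp only [x', Function.update_self]

def dualIncrement (A : ∀ i j : Fin N, Matrix (Fin (S i)) (Fin (S j)) ℝ)
    (s : ∀ j, Fin (S j)) : ∀ i, Fin (S i) → ℝ :=
  fun i => ∑ j ∈ univ.erase i, A i j *ᵥ Pi.single (s j) 1

theorem dualRel_eq (A : ∀ i j : Fin N, Matrix (Fin (S i)) (Fin (S j)) ℝ) :
    dualRel A = fun y y' => ∃ s, y' = y + dualIncrement A s := rfl

theorem dualIncrement_apply (A : ∀ i j : Fin N, Matrix (Fin (S i)) (Fin (S j)) ℝ)
    (s : ∀ j, Fin (S j)) (i : Fin N) (a : Fin (S i)) :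
    dualIncrement A s i a = ∑ j ∈ univ.erase i, A i j a (s j) := by
  simp [dualIncrement, Finset.sum_apply]

theorem sum_prod_smul_dualIncrement (A : ∀ i j : Fin N, Matrix (Fin (S i)) (Fin (S j)) ℝ)
    (x : ∀ i, Fin (S i) → ℝ) (hx : ∀ i, ∑ k, x i k = 1) :
    ∑ s : ∀ j, Fin (S j), (∏ j, x j (s j)) • dualIncrement A s =
      fun i => ∑ j ∈ univ.erase i, A i j *ᵥ x j := by
  funext i a
  simp only [Finset.sum_apply, Pi.smul_apply, smul_eq_mul, dualIncrement_apply, mul_sum]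
  rw [Finset.sum_comm]
  refine sum_congr rfl fun j _ => ?_
  rw [Fintype.sum_prod_mul_apply, prod_congr rfl fun i _ => hx i, prod_const_one, mul_one]
  simp [mulVec, dotProduct, mul_comm]

theorem sum_prod_nsmul_dualIncrement_eq_zero
    (A : ∀ i j : Fin N, Matrix (Fin (S i)) (Fin (S j)) ℝ) (xstar : ∀ i, Fin (S i) → ℝ)
    (hsum : ∀ i, ∑ k, xstar i k = 1)
    (hNE : ∀ i, ∑ j ∈ univ.erase i, A i j *ᵥ xstar j = 0)
    {b : ℕ} (hb : 0 < b) {c : ∀ i, Fin (S i) → ℕ} (hc : ∀ i k, xstar i k = c i k / b) :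
    ∑ s : ∀ j, Fin (S j), (∏ j, c j (s j)) • dualIncrement A s = 0 := by
  have hcast : ∀ s : ∀ j, Fin (S j),
      (∏ j, c j (s j)) • dualIncrement A s =
        (b : ℝ) ^ N • (∏ j, xstar j (s j)) • dualIncrement A s := by
    intro s
    have hck : ∀ j k, (c j k : ℝ) = b * xstar j k := fun j k => by
      rw [hc]; field_simp
    rw [← Nat.cast_smul_eq_nsmul ℝ, smul_smul, Nat.cast_prod]
    simp only [hck, prod_mul_distrib, prod_const, card_univ, Fintype.card_fin]
  simp only [hcast, ← smul_sum, sum_prod_smul_dualIncrement A xstar hsum, hNE]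
  exact smul_zero _

theorem dual_chain_irreducible_general
    (N : ℕ) (S : Fin N → ℕ)
    (A : ∀ i j : Fin N, Matrix (Fin (S i)) (Fin (S j)) ℝ)
    (xstar : ∀ i, Fin (S i) → ℝ)
    (hsum : ∀ i, ∑ k, xstar i k = 1)
    (hrat : ∃ b : ℕ, 0 < b ∧ ∀ i k, ∃ c : ℕ, 0 < c ∧ xstar i k = (c : ℝ) / b)
    (hNE : ∀ i, ∑ j ∈ Finset.univ.erase i, (A i j).mulVec (xstar j) = 0)
    (y0 : ∀ i, Fin (S i) → ℝ) :
    ∀ y y', Relation.ReflTransGen (dualRel A) y0 y →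
      Relation.ReflTransGen (dualRel A) y0 y' →
      Relation.ReflTransGen (dualRel A) y y' := by
  intro y y' hy hy'
  obtain ⟨b, hb, hc⟩ := hrat
  choose c hcpos hc using hc
  rw [dualRel_eq] at hy hy' ⊢
  refine (hy.symm_of_sum_nsmul_eq_zero _ (fun s => ∏ j, c j (s j)) (fun s => ?_) ?_).trans hy'
  · exact prod_pos fun j _ => hcpos j (s j)
  · exact sum_prod_nsmul_dualIncrement_eq_zero A xstar hsum hNE hb hc

/-- For a network zero-sum game with a rational fully-mixed Nash
equilibrium `x*` satisfying `∑_{j≠i} A^{(ij)} x*_j = 0` for all `i`, the Markov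
chain on the countable state space of payoff vectors reachable from `y⁰`
(every pure profile having positive probability, since `∇h* > 0`) is
irreducible: every reachable state can be reached from every other reachable
state in finitely many positive-probability steps. -/
theorem dual_chain_irreducible
    (N : ℕ) (S : Fin N → ℕ)
    (A : ∀ i j : Fin N, Matrix (Fin (S i)) (Fin (S j)) ℝ)
    (hzs : ∀ i j, A i j = -(A j i)ᵀ)
    (xstar : ∀ i, Fin (S i) → ℝ)
    (hmix : ∀ i k, 0 < xstar i k)
    (hsum : ∀ i, ∑ k, xstar i k = 1)
    (hrat : ∃ b : ℕ, 0 < b ∧ ∀ i k, ∃ c : ℕ, 0 < c ∧ xstar i k = (c : ℝ) / b)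
    (hNE : ∀ i, ∑ j ∈ Finset.univ.erase i, (A i j).mulVec (xstar j) = 0)
    (y0 : ∀ i, Fin (S i) → ℝ) :
    ∀ y y', Relation.ReflTransGen (dualRel A) y0 y →
      Relation.ReflTransGen (dualRel A) y0 y' →
      Relation.ReflTransGen (dualRel A) y y' :=
  dual_chain_irreducible_general N S A xstar hsum hrat hNE y0
end

section
/- Key step of the irreducibility proof: suppose the rational fully-mixed equilibrium satisfies x*_{i s} = c_{is}/b (positive integers c_{is}, common denominator b) and ∑_{j≠i} A^{(ij)} x*_j = 0 for all i. If state y' is reached from state y in one step by the pure profile s̄ (i.e., y'ᵢ = yᵢ + ∑_{j≠i} A^{(ij)} e_{s̄ⱼ}), then playing, over the next b−1 steps, each pure strategy sⱼ of player j exactly c_{j sⱼ} times except s̄ⱼ which is played c_{j s̄ⱼ} − 1 times, returns the chain from y' exactly to y: the total accumulated payoff over these b steps (including the original step) is b·∑_{j≠i} A^{(ij)} x*_j = 0 for each player i. -/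
/-! Over the `b` steps player `j` plays each pure strategy `s` exactly `c_{js} = b x*_{js}` times,
so by linearity the payoff accumulated by player `i` is
`∑_{j≠i} A^{(ij)} c_j = b ∑_{j≠i} A^{(ij)} x*_j`, which vanishes at the equilibrium. -/

open Finset Matrix

theorem add_sub_one_smul_add_sum_erase_eq_sum_smul {ι R M : Type*} [Fintype ι] [DecidableEq ι]
    [Ring R] [AddCommGroup M] [Module R M] (c : ι → R) (f : ι → M) (s : ι) :
    f s + ((c s - 1) • f s + ∑ k ∈ univ.erase s, c k • f k) = ∑ k, c k • f k := by
  rw [← add_sum_erase _ _ (mem_univ s), sub_smul, one_smul]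
  abel

theorem Matrix.sum_smul_mulVec_single_one {m n R : Type*} [Fintype n] [DecidableEq n]
    [CommSemiring R] (M : Matrix m n R) (v : n → R) :
    ∑ k, v k • M *ᵥ Pi.single k 1 = M *ᵥ v := by
  simp_rw [← mulVec_smul, ← mulVec_sum, ← Pi.single_smul', smul_eq_mul, mul_one,
    LinearMap.sum_single_apply]

theorem Matrix.mulVec_natCast_of_eq_div {m n K : Type*} [Fintype n] [Field K] [CharZero K]
    (M : Matrix m n K) (x : n → K) (c : n → ℕ) {b : ℕ} (hb : b ≠ 0)
    (hx : ∀ k, x k = (c k : K) / b) :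
    M *ᵥ (fun k => (c k : K)) = (b : K) • M *ᵥ x := by
  have hcx : (fun k => (c k : K)) = (b : K) • x := by
    ext k
    rw [Pi.smul_apply, hx, smul_eq_mul, mul_div_cancel₀ _ (Nat.cast_ne_zero.mpr hb)]
  rw [hcx, mulVec_smul]

theorem irreducibility_return_identity_general
    (N : ℕ) (S : Fin N → ℕ)
    (A : ∀ i j : Fin N, Matrix (Fin (S i)) (Fin (S j)) ℝ)
    (xstar : ∀ j, Fin (S j) → ℝ)
    (b : ℕ) (hb : 0 < b)
    (c : ∀ j, Fin (S j) → ℕ)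
    (hrat : ∀ j k, xstar j k = (c j k : ℝ) / b)
    (hNE : ∀ i, ∑ j ∈ Finset.univ.erase i, (A i j).mulVec (xstar j) = 0)
    (sbar : ∀ j, Fin (S j)) (i : Fin N) :
    (∑ j ∈ Finset.univ.erase i, (A i j).mulVec (Pi.single (sbar j) 1)) +
      (∑ j ∈ Finset.univ.erase i,
        (((c j (sbar j) : ℝ) - 1) • (A i j).mulVec (Pi.single (sbar j) 1) +
          ∑ k ∈ Finset.univ.erase (sbar j),
            (c j k : ℝ) • (A i j).mulVec (Pi.single k 1)))
      = (b : ℝ) • ∑ j ∈ Finset.univ.erase i, (A i j).mulVec (xstar j)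
    ∧
    (∑ j ∈ Finset.univ.erase i, (A i j).mulVec (Pi.single (sbar j) 1)) +
      (∑ j ∈ Finset.univ.erase i,
        (((c j (sbar j) : ℝ) - 1) • (A i j).mulVec (Pi.single (sbar j) 1) +
          ∑ k ∈ Finset.univ.erase (sbar j),
            (c j k : ℝ) • (A i j).mulVec (Pi.single k 1)))
      = 0 := by
  have per_player : ∀ j, A i j *ᵥ Pi.single (sbar j) 1 +
      (((c j (sbar j) : ℝ) - 1) • A i j *ᵥ Pi.single (sbar j) 1 +
        ∑ k ∈ univ.erase (sbar j), (c j k : ℝ) • A i j *ᵥ Pi.single k 1) =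
      (b : ℝ) • A i j *ᵥ xstar j := fun j => by
    rw [add_sub_one_smul_add_sum_erase_eq_sum_smul (fun k => (c j k : ℝ))
        (fun k => A i j *ᵥ Pi.single k 1),
      sum_smul_mulVec_single_one, mulVec_natCast_of_eq_div _ _ _ hb.ne' (hrat j)]
  rw [← sum_add_distrib, sum_congr rfl fun j _ => per_player j, ← smul_sum, hNE i, smul_zero]
  exact ⟨rfl, rfl⟩

/-- Key algebraic step of the irreducibility proof. If the rational
fully-mixed equilibrium satisfies `x*_{js} = c_{js}/b` and
`∑_{j≠i} A^{(ij)} x*_j = 0` for all `i`, then the payoff accumulated by the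
initial step with profile `s̄` plus the next `b−1` steps in which player `j`
plays each pure strategy `sⱼ` exactly `c_{j sⱼ}` times except `s̄ⱼ`, played
`c_{j s̄ⱼ} − 1` times, equals `b · ∑_{j≠i} A^{(ij)} x*_j = 0`: the chain returns
exactly to the starting state. -/
theorem irreducibility_return_identity
    (N : ℕ) (S : Fin N → ℕ)
    (A : ∀ i j : Fin N, Matrix (Fin (S i)) (Fin (S j)) ℝ)
    (xstar : ∀ j, Fin (S j) → ℝ)
    (b : ℕ) (hb : 0 < b)
    (c : ∀ j, Fin (S j) → ℕ) (hc : ∀ j k, 0 < c j k)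
    (hrat : ∀ j k, xstar j k = (c j k : ℝ) / b)
    (hNE : ∀ i, ∑ j ∈ Finset.univ.erase i, (A i j).mulVec (xstar j) = 0)
    (sbar : ∀ j, Fin (S j)) (i : Fin N) :
    (∑ j ∈ Finset.univ.erase i, (A i j).mulVec (Pi.single (sbar j) 1)) +
      (∑ j ∈ Finset.univ.erase i,
        (((c j (sbar j) : ℝ) - 1) • (A i j).mulVec (Pi.single (sbar j) 1) +
          ∑ k ∈ Finset.univ.erase (sbar j),
            (c j k : ℝ) • (A i j).mulVec (Pi.single k 1)))
      = (b : ℝ) • ∑ j ∈ Finset.univ.erase i, (A i j).mulVec (xstar j)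
    ∧
    (∑ j ∈ Finset.univ.erase i, (A i j).mulVec (Pi.single (sbar j) 1)) +
      (∑ j ∈ Finset.univ.erase i,
        (((c j (sbar j) : ℝ) - 1) • (A i j).mulVec (Pi.single (sbar j) 1) +
          ∑ k ∈ Finset.univ.erase (sbar j),
            (c j k : ℝ) • (A i j).mulVec (Pi.single k 1)))
      = 0 :=
  irreducibility_return_identity_general N S A xstar b hb c hrat hNE sbar i
end

section
/- In a two-player zero-sum game, if there exists a non-essential pure strategy (one played with probability zero in every Nash equilibrium), then for some player (say player 1) there exists a non-essential strategy s₁ and a Nash equilibrium (x*, y*) such that ⟨e_{s₁}, A y*⟩ < ⟨x*, A y*⟩, i.e., deviating to s₁ against the equilibrium is strictly worse than the equilibrium value. -/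
/-!
Fix an equilibrium `(x₀, y₀)` of value `v`; replacing `A` by `-Aᵀ` swaps the players, so let the
non-essential strategy `s` be a row. If `s` were never a strictly worse reply, every `y ∈ Δ` with
`A *ᵥ y ≤ v` (exactly the optimal strategies of the column player) would have `v ≤ (A *ᵥ y) s`.
Farkas' lemma turns this into some `l ≥ 0` with `(1 + ∑ l) v ≤ (Pi.single s 1 + l) ᵥ* A`, and
normalising `Pi.single s 1 + l` gives an optimal strategy of the row player that plays `s`.
Farkas' lemma itself is hyperplane separation from a finitely generated cone, which is closed by
Carathéodory's theorem for cones.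
-/

open Matrix

def IsNashEq {m n : ℕ} (A : Matrix (Fin m) (Fin n) ℝ)
    (xstar : Fin m → ℝ) (ystar : Fin n → ℝ) : Prop :=
  xstar ∈ stdSimplex ℝ (Fin m) ∧ ystar ∈ stdSimplex ℝ (Fin n) ∧
  (∀ x ∈ stdSimplex ℝ (Fin m), x ⬝ᵥ A.mulVec ystar ≤ xstar ⬝ᵥ A.mulVec ystar) ∧
  (∀ y ∈ stdSimplex ℝ (Fin n), xstar ⬝ᵥ A.mulVec ystar ≤ xstar ⬝ᵥ A.mulVec y)

open Finset

namespace PointedCone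

variable {ι E : Type*} [AddCommGroup E] [Module ℝ E] {V : ι → E} {S : Finset ι} {x : E}

theorem mem_hull_image_finset_iff :
    x ∈ hull ℝ (V '' S) ↔ ∃ c : ι → ℝ, (∀ i ∈ S, 0 ≤ c i) ∧ ∑ i ∈ S, c i • V i = x := by
  classical
  rw [Fintype.mem_span_image_iff_exists_fun]
  constructor
  · rintro ⟨c, rfl⟩
    refine ⟨fun i => if h : i ∈ S then c ⟨i, h⟩ else 0, fun i hi => by simpa [hi] using (c _).2,
      ?_⟩
    rw [← sum_attach]
    simp
  · rintro ⟨c, hc, rfl⟩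
    refine ⟨fun i => ⟨c i, hc i i.2⟩, ?_⟩
    rw [← sum_attach S]
    rfl

theorem exists_mem_hull_image_erase_of_sum_smul_eq_zero [DecidableEq ι]
    (hx : x ∈ hull ℝ (V '' S)) {g : ι → ℝ} (hg : ∑ i ∈ S, g i • V i = 0)
    (hpos : ∃ i ∈ S, 0 < g i) : ∃ i ∈ S, x ∈ hull ℝ (V '' (S.erase i)) := by
  obtain ⟨c, hc, rfl⟩ := mem_hull_image_finset_iff.mp hx
  obtain ⟨k, hk, hk_min⟩ := (S.filter (0 < g ·)).exists_min_image (fun i => c i / g i)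
    (by simpa [filter_nonempty_iff] using hpos)
  rw [mem_filter] at hk
  -- moving along the relation `g` until the first coefficient vanishes keeps the rest nonnegative
  set t := c k / g k
  have ht : 0 ≤ t := div_nonneg (hc k hk.1) hk.2.le
  have hd : ∀ i ∈ S, 0 ≤ c i - t * g i := by
    intro i hi
    rcases lt_or_ge 0 (g i) with hgi | hgi
    · have := hk_min i (mem_filter.mpr ⟨hi, hgi⟩)
      rw [le_div_iff₀ hgi] at this
      linarith
    · linarith [hc i hi, mul_nonpos_of_nonneg_of_nonpos ht hgi]
  have hdk : c k - t * g k = 0 := by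
    simp [t, div_mul_cancel₀ _ hk.2.ne']
  refine ⟨k, hk.1, mem_hull_image_finset_iff.mpr
    ⟨fun i => c i - t * g i, fun i hi => hd i (mem_of_mem_erase hi), ?_⟩⟩
  rw [sum_erase _ (by simp [hdk])]
  simp only [sub_smul, mul_smul, sum_sub_distrib, ← smul_sum, hg, smul_zero,
    sub_zero]

theorem exists_mem_hull_image_erase [DecidableEq ι] (hx : x ∈ hull ℝ (V '' S))
    (hV : ¬ LinearIndepOn ℝ V S) : ∃ i ∈ S, x ∈ hull ℝ (V '' (S.erase i)) := by
  obtain ⟨g, hg, i, hi, hgi⟩ := not_linearIndepOn_finset_iff.mp hV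
  rcases hgi.lt_or_gt with hneg | hpos
  · refine exists_mem_hull_image_erase_of_sum_smul_eq_zero hx (g := -g) ?_ ⟨i, hi, by simpa⟩
    simp [neg_smul, hg]
  · exact exists_mem_hull_image_erase_of_sum_smul_eq_zero hx hg ⟨i, hi, hpos⟩

/-- Carathéodory's theorem for cones. -/
theorem exists_linearIndepOn_of_mem_hull_image (hx : x ∈ hull ℝ (V '' S)) :
    ∃ T ⊆ S, LinearIndepOn ℝ V T ∧ x ∈ hull ℝ (V '' T) := by
  classical
  induction S using strongInduction with
  | H S ih =>
    by_cases hV : LinearIndepOn ℝ V S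
    · exact ⟨S, subset_rfl, hV, hx⟩
    · obtain ⟨i, hi, hxi⟩ := exists_mem_hull_image_erase hx hV
      obtain ⟨T, hT, hTV, hxT⟩ := ih _ (erase_ssubset hi) hxi
      exact ⟨T, hT.trans (erase_subset _ _), hTV, hxT⟩

variable [TopologicalSpace E] [IsTopologicalAddGroup E] [ContinuousSMul ℝ E] [T2Space E]

theorem isClosed_hull_image_of_linearIndepOn (hV : LinearIndepOn ℝ V S) :
    IsClosed (hull ℝ (V '' S) : Set E) := by
  set f := Fintype.linearCombination ℝ (fun i : (S : Set ι) => V i)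
  have hf : Topology.IsClosedEmbedding f := LinearMap.isClosedEmbedding_of_injective
    (LinearMap.ker_eq_bot.mpr (linearIndependent_iff_injective_fintypeLinearCombination.mp hV))
  have : (hull ℝ (V '' S) : Set E) = f '' Set.Ici 0 := by
    ext x
    simp only [SetLike.mem_coe, Fintype.mem_span_image_iff_exists_fun, Set.mem_image,
      Set.mem_Ici, f, Fintype.linearCombination_apply]
    constructor
    · rintro ⟨c, rfl⟩
      exact ⟨fun i => c i, fun i => (c i).2, rfl⟩
    · rintro ⟨c, hc, rfl⟩
      exact ⟨fun i => ⟨c i, hc i⟩, rfl⟩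
  rw [this]
  exact hf.isClosedMap _ isClosed_Ici

theorem isClosed_hull_image_finset : IsClosed (hull ℝ (V '' S) : Set E) := by
  have : (hull ℝ (V '' S) : Set E) =
      ⋃ T ∈ {T : Finset ι | T ⊆ S ∧ LinearIndepOn ℝ V T}, (hull ℝ (V '' T) : Set E) := by
    refine subset_antisymm (fun x hx => ?_) (Set.iUnion₂_subset fun T hT => ?_)
    · obtain ⟨T, hTS, hT, hxT⟩ := exists_linearIndepOn_of_mem_hull_image hx
      exact Set.mem_biUnion ⟨hTS, hT⟩ hxT
    · exact Submodule.span_mono (Set.image_mono hT.1)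
  rw [this]
  refine Set.Finite.isClosed_biUnion ?_ fun T hT => isClosed_hull_image_of_linearIndepOn hT.2
  exact S.powerset.finite_toSet.subset fun T hT => mem_powerset.mpr hT.1

end PointedCone

open PointedCone in
/-- **Farkas' lemma**, in the form dual to the linear program `max c ⬝ᵥ z`, `0 ≤ z`,
`M *ᵥ z ≤ 0`. -/
theorem Matrix.exists_nonneg_le_vecMul_of_dotProduct_nonpos {ι κ : Type*} [Fintype ι]
    [Fintype κ] (M : Matrix ι κ ℝ) {c : κ → ℝ}
    (h : ∀ z, 0 ≤ z → M *ᵥ z ≤ 0 → c ⬝ᵥ z ≤ 0) : ∃ l, 0 ≤ l ∧ c ≤ l ᵥ* M := by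
  classical
  let V : ι ⊕ κ → κ → ℝ := Sum.elim (fun i => M i) fun j => -Pi.single j 1
  by_cases hc : c ∈ hull ℝ (V '' (univ : Finset (ι ⊕ κ)))
  · obtain ⟨a, ha, hsum⟩ := mem_hull_image_finset_iff.mp hc
    refine ⟨fun i => a (.inl i), fun i => ha _ (mem_univ _), fun j => ?_⟩
    have hcj : c j = ((fun i => a (.inl i)) ᵥ* M) j - a (.inr j) := by
      simp [← hsum, Fintype.sum_sum_type, V, vecMul, dotProduct, Pi.single_apply, mul_comm,
        sub_eq_add_neg]
    linarith [ha (.inr j) (mem_univ _)]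
  · let C : ProperCone ℝ (κ → ℝ) :=
      ⟨hull ℝ (V '' (univ : Finset (ι ⊕ κ))), isClosed_hull_image_finset⟩
    obtain ⟨f, hfC, hfc⟩ := C.hyperplane_separation_point hc
    let z : κ → ℝ := fun j => -f (Pi.single j 1)
    have hf : ∀ x, f x = -(x ⬝ᵥ z) := by
      intro x
      conv_lhs => rw [pi_eq_sum_univ' x]
      simp [z, dotProduct]
    have hV : ∀ k, 0 ≤ f (V k) := fun k => hfC _ (subset_hull ⟨k, by simp, rfl⟩)
    have hz : 0 ≤ z := fun j => by simpa [V, z] using hV (.inr j)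
    have hMz : M *ᵥ z ≤ 0 := fun i => by simpa [V, hf, mulVec] using hV (.inl i)
    have := h z hz hMz
    rw [hf] at hfc
    linarith

section

variable {ι κ : Type*} [Fintype ι] [Fintype κ]

theorem dotProduct_le_of_mem_stdSimplex {x u : ι → ℝ} {r : ℝ} (hx : x ∈ stdSimplex ℝ ι)
    (hu : ∀ i, u i ≤ r) : x ⬝ᵥ u ≤ r := by
  calc x ⬝ᵥ u ≤ x ⬝ᵥ fun _ => r := dotProduct_le_dotProduct_of_nonneg_left hu hx.1
    _ = r := by simp [dotProduct, ← sum_mul, hx.2]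

theorem le_dotProduct_of_mem_stdSimplex {x u : ι → ℝ} {r : ℝ} (hx : x ∈ stdSimplex ℝ ι)
    (hu : ∀ i, r ≤ u i) : r ≤ x ⬝ᵥ u := by
  calc r = x ⬝ᵥ fun _ => r := by simp [dotProduct, ← sum_mul, hx.2]
    _ ≤ x ⬝ᵥ u := dotProduct_le_dotProduct_of_nonneg_left hu hx.1

theorem inv_sum_smul_mem_stdSimplex {z : ι → ℝ} (hz : 0 ≤ z) (hsum : 0 < ∑ i, z i) :
    (∑ i, z i)⁻¹ • z ∈ stdSimplex ℝ ι :=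
  ⟨fun i => smul_nonneg (inv_nonneg.mpr hsum.le) (hz i), by
    simp [← mul_sum, hsum.ne']⟩

theorem Matrix.exists_nonneg_pos_vecMul_nonneg (B : Matrix ι κ ℝ) (s : ι)
    (h : ∀ z, 0 ≤ z → B *ᵥ z ≤ 0 → 0 ≤ (B *ᵥ z) s) :
    ∃ w, 0 ≤ w ∧ 0 < w s ∧ 0 ≤ w ᵥ* B := by
  classical
  obtain ⟨l, hl, hle⟩ := B.exists_nonneg_le_vecMul_of_dotProduct_nonpos (c := -B s)
    fun z hz hBz => by
      rw [neg_dotProduct, neg_nonpos]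
      exact h z hz hBz
  refine ⟨Pi.single s 1 + l, add_nonneg (single_mem_stdSimplex ℝ s).1 hl, ?_, fun j => ?_⟩
  · simpa using add_pos_of_pos_of_nonneg one_pos (hl s)
  · have := hle j
    simp only [Pi.neg_apply] at this
    simp only [add_vecMul, single_vecMul, one_smul, row_apply', Pi.add_apply, Pi.zero_apply]
    linarith

/-- Strict complementarity for a single row of a matrix game of value `v`. -/
theorem exists_mem_stdSimplex_pos_le_vecMul (A : Matrix ι κ ℝ) (v : ℝ) (s : ι)
    (h : ∀ y ∈ stdSimplex ℝ κ, (∀ i, (A *ᵥ y) i ≤ v) → v ≤ (A *ᵥ y) s) :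
    ∃ x ∈ stdSimplex ℝ ι, 0 < x s ∧ ∀ j, v ≤ (x ᵥ* A) j := by
  set M := A - of fun _ _ => v
  have hM_mulVec : ∀ z i, (M *ᵥ z) i = (A *ᵥ z) i - v * ∑ j, z j := by
    simp [M, sub_mul, mulVec, dotProduct, mul_sum]
  have hM_vecMul : ∀ w j, (w ᵥ* M) j = (w ᵥ* A) j - (∑ i, w i) * v := by
    simp [M, mul_sub, vecMul, dotProduct, sum_mul]
  obtain ⟨w, hw, hws, hwM⟩ := M.exists_nonneg_pos_vecMul_nonneg s fun z hz hMz => by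
    rcases (sum_nonneg fun j _ => hz j).eq_or_lt with hsum | hsum
    · have : z = 0 := funext fun j =>
        (sum_eq_zero_iff_of_nonneg fun j _ => hz j).mp hsum.symm j (mem_univ j)
      simp [this]
    · have hAy : ∀ i, (A *ᵥ (∑ j, z j)⁻¹ • z) i = (∑ j, z j)⁻¹ * (A *ᵥ z) i := by
        simp [mulVec_smul]
      have hy := h _ (inv_sum_smul_mem_stdSimplex hz hsum) fun i => by
        have := hMz i
        rw [hM_mulVec, Pi.zero_apply] at this
        rw [hAy, inv_mul_le_iff₀ hsum]
        linarith
      rw [hAy, le_inv_mul_iff₀ hsum] at hy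
      linarith [hM_mulVec z s]
  have hsum : 0 < ∑ i, w i := hws.trans_le (single_le_sum (fun i _ => hw i) (mem_univ s))
  refine ⟨_, inv_sum_smul_mem_stdSimplex hw hsum, mul_pos (inv_pos.mpr hsum) hws, fun j => ?_⟩
  have := hwM j
  rw [hM_vecMul, Pi.zero_apply] at this
  rw [smul_vecMul, Pi.smul_apply, smul_eq_mul, le_inv_mul_iff₀ hsum]
  linarith

theorem Matrix.dotProduct_neg_transpose_mulVec {α : Type*} [CommRing α] (A : Matrix ι κ α)
    (x : ι → α) (y : κ → α) : y ⬝ᵥ (-Aᵀ) *ᵥ x = -(x ⬝ᵥ A *ᵥ y) := by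
  rw [neg_mulVec, dotProduct_neg, mulVec_transpose, dotProduct_comm, ← dotProduct_mulVec]

end

namespace IsNashEq

variable {m n : ℕ} {A : Matrix (Fin m) (Fin n) ℝ} {x : Fin m → ℝ} {y : Fin n → ℝ}

theorem mulVec_le (h : IsNashEq A x y) (i : Fin m) : (A *ᵥ y) i ≤ x ⬝ᵥ A *ᵥ y := by
  simpa using h.2.2.1 _ (single_mem_stdSimplex ℝ i)

theorem le_vecMul (h : IsNashEq A x y) (j : Fin n) : x ⬝ᵥ A *ᵥ y ≤ (x ᵥ* A) j := by
  simpa only [dotProduct_mulVec, dotProduct_single, mul_one] using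
    h.2.2.2 _ (single_mem_stdSimplex ℝ j)

theorem of_mulVec_le_of_le_vecMul (hx : x ∈ stdSimplex ℝ (Fin m))
    (hy : y ∈ stdSimplex ℝ (Fin n)) {v : ℝ} (hAy : ∀ i, (A *ᵥ y) i ≤ v)
    (hxA : ∀ j, v ≤ (x ᵥ* A) j) : IsNashEq A x y := by
  have hle : ∀ y' ∈ stdSimplex ℝ (Fin n), v ≤ x ⬝ᵥ A *ᵥ y' := fun y' hy' => by
    rw [dotProduct_mulVec, dotProduct_comm]
    exact le_dotProduct_of_mem_stdSimplex hy' hxA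
  have hval : x ⬝ᵥ A *ᵥ y = v := le_antisymm (dotProduct_le_of_mem_stdSimplex hx hAy) (hle y hy)
  exact ⟨hx, hy, fun x' hx' => hval ▸ dotProduct_le_of_mem_stdSimplex hx' hAy,
    fun y' hy' => hval ▸ hle y' hy'⟩

theorem neg_transpose_iff : IsNashEq (-Aᵀ) y x ↔ IsNashEq A x y := by
  simp only [IsNashEq, dotProduct_neg_transpose_mulVec, neg_le_neg_iff]
  tauto

end IsNashEq

theorem exists_isNashEq_single_dotProduct_lt {m n : ℕ} {A : Matrix (Fin m) (Fin n) ℝ}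
    {x₀ : Fin m → ℝ} {y₀ : Fin n → ℝ} {s : Fin m}
    (hs : ∀ x y, IsNashEq A x y → x s = 0) (h₀ : IsNashEq A x₀ y₀) :
    ∃ x y, IsNashEq A x y ∧ Pi.single s 1 ⬝ᵥ A *ᵥ y < x ⬝ᵥ A *ᵥ y := by
  by_contra! hcon
  obtain ⟨x, hx, hxs, hxA⟩ := exists_mem_stdSimplex_pos_le_vecMul A (x₀ ⬝ᵥ A *ᵥ y₀) s
    fun y hy hAy => by
      simpa using (h₀.2.2.2 y hy).trans
        (hcon x₀ y (.of_mulVec_le_of_le_vecMul h₀.1 hy hAy h₀.le_vecMul))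
  exact hxs.ne' (hs x y₀ (.of_mulVec_le_of_le_vecMul hx h₀.2.1 h₀.mulVec_le hxA))

/-- If some player of a two-player zero-sum game has a
non-essential pure strategy (one played with probability zero in every Nash
equilibrium), then for some player there is a non-essential strategy and a Nash
equilibrium against which deviating to that strategy is strictly worse than the
equilibrium value. -/
theorem nonessential_strategy_strictly_worse
    (m n : ℕ) (A : Matrix (Fin m) (Fin n) ℝ)
    (hexists : (∃ s : Fin m, ∀ x y, IsNashEq A x y → x s = 0) ∨
               (∃ t : Fin n, ∀ x y, IsNashEq A x y → y t = 0))
    (hNEexists : ∃ x y, IsNashEq A x y) :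
    (∃ s : Fin m, (∀ x y, IsNashEq A x y → x s = 0) ∧
      ∃ xstar ystar, IsNashEq A xstar ystar ∧
        (Pi.single s (1 : ℝ)) ⬝ᵥ A.mulVec ystar < xstar ⬝ᵥ A.mulVec ystar) ∨
    (∃ t : Fin n, (∀ x y, IsNashEq A x y → y t = 0) ∧
      ∃ xstar ystar, IsNashEq A xstar ystar ∧
        xstar ⬝ᵥ A.mulVec ystar < xstar ⬝ᵥ A.mulVec (Pi.single t (1 : ℝ))) := by
  obtain ⟨x₀, y₀, h₀⟩ := hNEexists
  rcases hexists with ⟨s, hs⟩ | ⟨t, ht⟩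
  · exact .inl ⟨s, hs, exists_isNashEq_single_dotProduct_lt hs h₀⟩
  · obtain ⟨y, x, h, hlt⟩ := exists_isNashEq_single_dotProduct_lt (A := -Aᵀ) (s := t)
      (fun y x h => ht x y (IsNashEq.neg_transpose_iff.mp h)) (IsNashEq.neg_transpose_iff.mpr h₀)
    rw [dotProduct_neg_transpose_mulVec, dotProduct_neg_transpose_mulVec, neg_lt_neg_iff] at hlt
    exact .inr ⟨t, ht, x, y, IsNashEq.neg_transpose_iff.mp h, hlt⟩
end
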